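/- Let μ be a directed metric on a nonempty finite set S, let V be a set with S ⊆ V, and let d, d' be two cyclically tight extensions of μ on V. Then d and d' are congruent if and only if for every x ∈ V the difference d_x − d'_x lies in ℝe, where e ∈ ℝ^{S^{cr}} has e^c ≡ 1 and e^r ≡ −1. -/

import Mathlib

open scoped BigOperators

/-- Points of `ℝ^{S^{cr}}`: pairs `p = (p^c, p^r)` of functions `S → ℝ`,
with the componentwise partial order (the product/pi order). -/
abbrev Pt (S : Type*) := (S → ℝ) × (S → ℝ)

/-- `μ` is a directed distance: nonnegative with zero diagonal. -/
def DirDist {S : Type*} (μ : S → S → ℝ) : Prop :=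
  (∀ s t, 0 ≤ μ s t) ∧ (∀ s, μ s s = 0)

/-- `d` is a directed metric: a directed distance satisfying the triangle inequality. -/
def DirMetric {V : Type*} (d : V → V → ℝ) : Prop :=
  DirDist d ∧ ∀ x y z, d x z ≤ d x y + d y z

/-- The polyhedron `Π_μ`. -/
def PiP {S : Type*} (μ : S → S → ℝ) : Set (Pt S) :=
  {p | ∀ s t, μ s t ≤ p.1 s + p.2 t}

/-- The polyhedron `P_μ = Π_μ ∩ ℝ_+^{S^{cr}}`. -/
def PP {S : Type*} (μ : S → S → ℝ) : Set (Pt S) :=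
  {p ∈ PiP μ | 0 ≤ p}

/-- The directed tight span `T_μ`: minimal elements of `P_μ`. -/
def TT {S : Type*} (μ : S → S → ℝ) : Set (Pt S) :=
  {p ∈ PP μ | ∀ q ∈ PP μ, q ≤ p → q = p}

/-- `Q_μ`: minimal elements of `Π_μ`. -/
def QQ {S : Type*} (μ : S → S → ℝ) : Set (Pt S) :=
  {p ∈ PiP μ | ∀ q ∈ PiP μ, q ≤ p → q = p}

/-- `Q_μ^+ = Q_μ ∩ ℝ_+^{S^{cr}}`. -/
def QP {S : Type*} (μ : S → S → ℝ) : Set (Pt S) :=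
  QQ μ ∩ {p | 0 ≤ p}

/-- `D_∞^+(f,g) = max_x (g(x) - f(x))_+`. -/
noncomputable def Dplus {X : Type*} [Fintype X] (f g : X → ℝ) : ℝ :=
  ⨆ x, max (g x - f x) 0

/-- `D_∞(p,q) = max ( D_∞^+(p^c,q^c), D_∞^+(q^r,p^r) )`. -/
noncomputable def Dinf {S : Type*} [Fintype S] (p q : Pt S) : ℝ :=
  max (Dplus p.1 q.1) (Dplus q.2 p.2)

/-- A subset `R` is balanced if no pair `p, q ∈ R` satisfies `p^c < q^c`,
and no pair satisfies `p^r < q^r`. -/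
def BalancedSet {S : Type*} (R : Set (Pt S)) : Prop :=
  (¬ ∃ p ∈ R, ∃ q ∈ R, ∀ s, p.1 s < q.1 s) ∧
  (¬ ∃ p ∈ R, ∃ q ∈ R, ∀ s, p.2 s < q.2 s)

/-- The vector `e = (1, -1)` spanning the linearity space of `Π_μ`. -/
def eVec (S : Type*) : Pt S := (fun _ => 1, fun _ => -1)

/-- `R ⊆ Q_μ` is a section: every point of `Q_μ` differs from exactly one point
of `R` by a multiple of `e`. -/
def IsSection {S : Type*} (μ : S → S → ℝ) (R : Set (Pt S)) : Prop :=
  R ⊆ QQ μ ∧ ∀ q ∈ QQ μ, ∃! p, p ∈ R ∧ ∃ α : ℝ, q - p = α • eVec S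

/-- The length of the cycle `(x 0, x 1, …, x m)` with respect to `d`. -/
def cycLen {V : Type*} (d : V → V → ℝ) (m : ℕ) (x : Fin (m + 1) → V) : ℝ :=
  ∑ i, d (x i) (x (i + 1))


/-- The point `d_x ∈ ℝ^{S^{cr}}` associated with `x ∈ V`. -/
def dVec {V : Type*} (S : Set V) (d : V → V → ℝ) (x : V) : Pt S :=
  (fun s => d s x, fun s => d x s)

/-- `(V,d)` is a cyclically tight extension of `(S,μ)`. -/
def IsCycTightExt {V : Type*} (S : Set V) (μ : S → S → ℝ) (d : V → V → ℝ) : Prop :=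
  DirMetric d ∧ (∀ s t : S, d s t = μ s t) ∧
  ¬ ∃ d' : V → V → ℝ, DirMetric d' ∧ (∀ s t : S, d' s t = μ s t) ∧
      (∀ (m : ℕ) (x : Fin (m + 1) → V), cycLen d' m x ≤ cycLen d m x) ∧
      (∃ (m : ℕ) (x : Fin (m + 1) → V), cycLen d' m x < cycLen d m x)

/-!
Congruence forces `d_x - d'_x ∈ ℝe`: since `d` and `d'` agree on `S`, equality of the lengths of
the triangles `(s, x, t)` gives `d(s,x) + d(x,t) = d'(s,x) + d'(x,t)` for all `s, t ∈ S`.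

Conversely, if `d'_x = d_x + β(x) e`, then `g(u,v) = d'(u,v) + β(u) - β(v)` has the same cycle
lengths as `d'` and satisfies `g_x = d_x`. The signed sup-distance
`D(u,v) = max_s max(d(s,v) - d(s,u), d(u,s) - d(v,s))` is bounded by both `d` and `g`, satisfies
the triangle inequality and equals `μ` on `S`; shifting it by the potential `π(v) = min_s D(s,v)`
makes it a directed metric extending `μ` with the cycle lengths of `D`. Cyclic tightness of `d`
then gives `d(C) ≤ D(C) ≤ g(C) = d'(C)`, and symmetry gives equality.
-/

section CycleLength

variable {V : Type*}

theorem cycLen_mono {d d' : V → V → ℝ} (h : ∀ u v, d u v ≤ d' u v) (m : ℕ)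
    (x : Fin (m + 1) → V) : cycLen d m x ≤ cycLen d' m x :=
  Finset.sum_le_sum fun _ _ => h _ _

theorem cycLen_add_sub (d : V → V → ℝ) (f : V → ℝ) (m : ℕ) (x : Fin (m + 1) → V) :
    cycLen (fun u v => d u v + f u - f v) m x = cycLen d m x := by
  have hrot : ∑ i : Fin (m + 1), f (x (i + 1)) = ∑ i, f (x i) :=
    Fintype.sum_equiv (Equiv.addRight 1) _ _ fun _ => rfl
  simp only [cycLen, Finset.sum_sub_distrib, Finset.sum_add_distrib, hrot, add_sub_cancel_right]

theorem cycLen_triangle (d : V → V → ℝ) (a b c : V) :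
    cycLen d 2 ![a, b, c] = d a b + d b c + d c a := by
  simp [cycLen, Fin.sum_univ_three]

end CycleLength

/-- The directed sup-distance `D_∞` without the positive parts. -/
noncomputable def signedDinf {S : Type*} (p q : Pt S) : ℝ :=
  ⨆ s, max (q.1 s - p.1 s) (p.2 s - q.2 s)

section SignedDinf

variable {S : Type*}

theorem le_signedDinf [Finite S] (p q : Pt S) (s : S) :
    max (q.1 s - p.1 s) (p.2 s - q.2 s) ≤ signedDinf p q :=
  le_ciSup (f := fun s => max (q.1 s - p.1 s) (p.2 s - q.2 s)) (Set.finite_range _).bddAbove s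

theorem signedDinf_self [Nonempty S] (p : Pt S) : signedDinf p p = 0 := by
  simp [signedDinf]

theorem signedDinf_triangle [Finite S] [Nonempty S] (p q r : Pt S) :
    signedDinf p r ≤ signedDinf p q + signedDinf q r :=
  ciSup_le fun s => by
    have hpq := le_signedDinf p q s
    have hqr := le_signedDinf q r s
    refine max_le ?_ ?_ <;>
      linarith [le_max_left (q.1 s - p.1 s) (p.2 s - q.2 s),
        le_max_right (q.1 s - p.1 s) (p.2 s - q.2 s),
        le_max_left (r.1 s - q.1 s) (q.2 s - r.2 s),
        le_max_right (r.1 s - q.1 s) (q.2 s - r.2 s)]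

end SignedDinf

section DVec

variable {V : Type*} {S : Set V}

theorem dVec_sub_eq_smul_eVec_iff {d d' : V → V → ℝ} {x : V} {a : ℝ} :
    dVec S d x - dVec S d' x = a • eVec S ↔
      ∀ s : S, d s x - d' s x = a ∧ d x s - d' x s = -a := by
  simp [Prod.ext_iff, funext_iff, dVec, eVec, forall_and]

theorem signedDinf_dVec_le [Nonempty S] {g : V → V → ℝ} (hg : ∀ u v w, g u w ≤ g u v + g v w)
    (u v : V) : signedDinf (dVec S g u) (dVec S g v) ≤ g u v :=
  ciSup_le fun s => max_le (by simp only [dVec]; linarith [hg s u v])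
    (by simp only [dVec]; linarith [hg u v s])

theorem le_signedDinf_dVec [Finite S] {g : V → V → ℝ} (hg : ∀ u, g u u = 0) (s t : S) :
    g s t ≤ signedDinf (dVec S g s) (dVec S g t) := by
  have h := le_signedDinf (dVec S g s) (dVec S g t) s
  simp only [dVec, hg, sub_zero] at h
  exact (le_max_left _ _).trans h

end DVec

section Extension

variable {V : Type*} {S : Set V} [Finite S] [Nonempty S]

theorem exists_dirMetric_cycLen_eq {D : V → V → ℝ} (hdiag : ∀ u, D u u = 0)
    (htri : ∀ u v w, D u w ≤ D u v + D v w) (hS : ∀ s t : S, 0 ≤ D s t) :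
    ∃ D' : V → V → ℝ, DirMetric D' ∧ (∀ s t : S, D' s t = D s t) ∧
      ∀ m x, cycLen D' m x = cycLen D m x := by
  set π : V → ℝ := fun v => ⨅ s : S, D s v
  have hπ_le : ∀ (s : S) v, π v ≤ D s v := fun s v =>
    ciInf_le (Set.finite_range _).bddBelow s
  have hπ_S : ∀ t : S, π t = 0 := fun t =>
    le_antisymm ((hπ_le t t).trans_eq (hdiag t)) (le_ciInf fun s => hS s t)
  have hπ_lip : ∀ u v, π v ≤ π u + D u v := by
    intro u v
    have : π v - D u v ≤ π u := le_ciInf fun s => by linarith [hπ_le s v, htri s u v]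
    linarith
  refine ⟨fun u v => D u v + π u - π v, ⟨⟨fun u v => ?_, fun u => ?_⟩, fun u v w => ?_⟩,
    fun s t => ?_, cycLen_add_sub D π⟩
  · linarith [hπ_lip u v]
  · simp [hdiag]
  · linarith [htri u v w]
  · simp [hπ_S]

theorem IsCycTightExt.cycLen_le {μ : S → S → ℝ} {d g : V → V → ℝ}
    (hd : IsCycTightExt S μ d) (hg : ∀ u v w, g u w ≤ g u v + g v w)
    (hgd : ∀ x, dVec S g x = dVec S d x) (m : ℕ) (x : Fin (m + 1) → V) :
    cycLen d m x ≤ cycLen g m x := by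
  obtain ⟨hdm, hdμ, htight⟩ := hd
  set D : V → V → ℝ := fun u v => signedDinf (dVec S d u) (dVec S d v)
  have hDd : ∀ u v, D u v ≤ d u v := signedDinf_dVec_le hdm.2
  have hDg : ∀ u v, D u v ≤ g u v := fun u v => by
    simpa only [D, hgd] using signedDinf_dVec_le (S := S) hg u v
  have hDS : ∀ s t : S, D s t = d s t := fun s t =>
    le_antisymm (hDd s t) (le_signedDinf_dVec hdm.1.2 s t)
  obtain ⟨D', hD'm, hD'S, hD'cyc⟩ := exists_dirMetric_cycLen_eq (S := S) (D := D)
    (fun u => signedDinf_self _) (fun u v w => signedDinf_triangle _ _ _)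
    (fun s t => (hDS s t).symm ▸ hdm.1.1 s t)
  have hle : cycLen d m x ≤ cycLen D' m x := by
    by_contra! hlt
    exact htight ⟨D', hD'm, fun s t => by rw [hD'S, hDS, hdμ],
      fun m x => (hD'cyc m x).trans_le (cycLen_mono hDd m x), m, x, hlt⟩
  calc cycLen d m x ≤ cycLen D' m x := hle
    _ = cycLen D m x := hD'cyc m x
    _ ≤ cycLen g m x := cycLen_mono hDg m x

theorem IsCycTightExt.cycLen_le_of_dVec_sub_eq_smul {μ : S → S → ℝ} {d d' : V → V → ℝ}
    (hd : IsCycTightExt S μ d) (hd' : DirMetric d') (β : V → ℝ)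
    (hβ : ∀ x, dVec S d' x - dVec S d x = β x • eVec S) (m : ℕ) (x : Fin (m + 1) → V) :
    cycLen d m x ≤ cycLen d' m x := by
  have hβ' := fun x => dVec_sub_eq_smul_eVec_iff.mp (hβ x)
  have hβS : ∀ s : S, β s = 0 := fun s => by
    have := (hβ' s s).1
    rw [hd'.1.2, hd.1.1.2] at this
    linarith
  have hgd : ∀ y, dVec S (fun u v => d' u v + β u - β v) y = dVec S d y := fun y => by
    refine Prod.ext (funext fun s => ?_) (funext fun s => ?_) <;>
      simp only [dVec, hβS] <;> linarith [(hβ' y s).1, (hβ' y s).2]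
  have hg := hd.cycLen_le (fun u v w => by linarith [hd'.2 u v w]) hgd m x
  rwa [cycLen_add_sub] at hg

end Extension

theorem exists_dVec_sub_eq_smul_of_cycLen_eq {V : Type*} {S : Set V} [Nonempty S]
    {d d' : V → V → ℝ} (hS : ∀ s t : S, d s t = d' s t)
    (hcong : ∀ (m : ℕ) (x : Fin (m + 1) → V), cycLen d m x = cycLen d' m x) (x : V) :
    ∃ α : ℝ, dVec S d x - dVec S d' x = α • eVec S := by
  have htri : ∀ s t : S, d s x + d x t = d' s x + d' x t := fun s t => by
    have := hcong 2 ![s, x, t]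
    rw [cycLen_triangle, cycLen_triangle, hS t s] at this
    linarith
  obtain ⟨σ⟩ := ‹Nonempty S›
  refine ⟨d σ x - d' σ x, dVec_sub_eq_smul_eVec_iff.mpr fun s => ⟨?_, ?_⟩⟩
  · linarith [htri s σ, htri σ σ]
  · linarith [htri σ s]

theorem stmt14_general {V : Type*} (S : Set V) [Fintype S] (hS : S.Nonempty)
    (μ : S → S → ℝ)
    (d d' : V → V → ℝ)
    (hd : IsCycTightExt S μ d) (hd' : IsCycTightExt S μ d') :
    (∀ (m : ℕ) (x : Fin (m + 1) → V), cycLen d m x = cycLen d' m x) ↔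
    (∀ x : V, ∃ α : ℝ, dVec S d x - dVec S d' x = α • eVec S) := by
  have : Nonempty S := hS.to_subtype
  constructor
  · exact exists_dVec_sub_eq_smul_of_cycLen_eq fun s t => (hd.2.1 s t).trans (hd'.2.1 s t).symm
  · intro hα m x
    choose α hα using hα
    exact le_antisymm
      (hd.cycLen_le_of_dVec_sub_eq_smul hd'.1 (fun y => -α y)
        (fun y => by rw [← neg_sub, hα y, neg_smul]) m x)
      (hd'.cycLen_le_of_dVec_sub_eq_smul hd.1 α hα m x)

/-- Proposition 2.13 (1).  Two cyclically tight extensions `d, d'` of `μ` are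
congruent iff `d_x - d'_x ∈ ℝe` for every `x ∈ V`. -/
theorem stmt14 {V : Type*} (S : Set V) [Fintype S] (hS : S.Nonempty)
    (μ : S → S → ℝ) (hμ : DirMetric μ)
    (d d' : V → V → ℝ)
    (hd : IsCycTightExt S μ d) (hd' : IsCycTightExt S μ d') :
    (∀ (m : ℕ) (x : Fin (m + 1) → V), cycLen d m x = cycLen d' m x) ↔
    (∀ x : V, ∃ α : ℝ, dVec S d x - dVec S d' x = α • eVec S) :=
  stmt14_general S hS μ d d' hd hd'
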